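/- The labeling λ_• of the pointed partition poset Π_n^• satisfies the rank two switching property: for every interval [x,y] of Π_n^• with ρ(y) − ρ(x) = 2, if the unique increasing maximal chain of [x,y] has label word ab, then there exists a unique maximal chain of [x,y] with label word ba. -/

import Mathlib

open Finset

open scoped BigOperators Classical

/-! ## Generic machinery for edge labelings of posets presented by cover relations -/

section Chains

variable {α : Type*} {L : Type*}

/-- The word of labels read along a list of poset elements. -/
def wordOf (lab : α → α → L) : List α → List L
  | x :: y :: rest => lab x y :: wordOf lab (y :: rest)
  | _ => []

/-- `c` is a saturated chain from `x` to `y` with respect to the cover relation `cov`;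
in a graded poset these are exactly the maximal chains of the interval `[x, y]`. -/
def IsSatChain (cov : α → α → Prop) (x y : α) (c : List α) : Prop :=
  c.Chain' cov ∧ c.head? = some x ∧ c.getLast? = some y

/-- A word of labels is increasing if consecutive labels strictly increase. -/
def IncWord (lt : L → L → Prop) (w : List L) : Prop := w.Chain' lt

/-- A word of labels is ascent-free if no consecutive pair of labels strictly increases. -/
def AscFree (lt : L → L → Prop) (w : List L) : Prop := w.Chain' fun a b => ¬ lt a b

/-- The partial order generated by a cover relation. -/
def leOf (cov : α → α → Prop) : α → α → Prop := Relation.ReflTransGen cov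

/-- The strict order generated by a cover relation. -/
def ltOf (cov : α → α → Prop) (a b : α) : Prop := leOf cov a b ∧ a ≠ b

/-- An ER-labeling: every closed interval has a unique increasing maximal chain. -/
def IsERLabeling (cov : α → α → Prop) (lab : α → α → L) (lt : L → L → Prop) : Prop :=
  ∀ x y, leOf cov x y → ∃! c, IsSatChain cov x y c ∧ IncWord lt (wordOf lab c)

/-- The rank two switching property: in every rank-two interval whose increasing chain
has word of labels `ab`, there is a unique chain with word of labels `ba`. -/
def RankTwoSwitch (cov : α → α → Prop) (lab : α → α → L) (lt : L → L → Prop) : Prop :=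
  ∀ x y c a b, IsSatChain cov x y c → IncWord lt (wordOf lab c) → wordOf lab c = [a, b] →
    ∃! c', IsSatChain cov x y c' ∧ wordOf lab c' = [b, a]

/-- In every interval, distinct ascent-free maximal chains have distinct label words. -/
def AscFreeInj (cov : α → α → Prop) (lab : α → α → L) (lt : L → L → Prop) : Prop :=
  ∀ x y c c', IsSatChain cov x y c → IsSatChain cov x y c' →
    AscFree lt (wordOf lab c) → AscFree lt (wordOf lab c') →
    wordOf lab c = wordOf lab c' → c = c'

/-- An EW-labeling. -/
def IsEWLabeling (cov : α → α → Prop) (lab : α → α → L) (lt : L → L → Prop) : Prop :=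
  IsERLabeling cov lab lt ∧ RankTwoSwitch cov lab lt ∧ AscFreeInj cov lab lt

/-- An EL-labeling: every closed interval has a unique increasing maximal chain,
which lexicographically precedes every other maximal chain of the interval. -/
def IsELLabeling (cov : α → α → Prop) (lab : α → α → L) (lt : L → L → Prop) : Prop :=
  ∀ x y, leOf cov x y →
    ∃ c, (IsSatChain cov x y c ∧ IncWord lt (wordOf lab c)) ∧
      ∀ c', IsSatChain cov x y c' → c' ≠ c →
        ¬ IncWord lt (wordOf lab c') ∧ List.Lex lt (wordOf lab c) (wordOf lab c')

end Chains

/-! ## Möbius functions and Whitney numbers -/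

section Whitney

variable {α : Type*} {β : Type*}

/-- Auxiliary Möbius function computed with fuel; for an element of rank `k` of a
graded poset, fuel `k` computes the one-variable Möbius function `μ(0̂, ·)`. -/
noncomputable def muAux (ltr : α → α → Prop) (bot : α) : ℕ → α → ℤ
  | 0, x => if x = bot then 1 else 0
  | k + 1, x => if x = bot then 1 else - ∑ᶠ (y : α) (_ : ltr y x), muAux ltr bot k y

/-- The one-variable Möbius function `μ(0̂, x)` of a graded poset presented by its
cover relation `cov`, minimum `bot` and rank function `rk`. -/
noncomputable def muBot (cov : α → α → Prop) (bot : α) (rk : α → ℕ) (x : α) : ℤ :=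
  muAux (ltOf cov) bot (rk x) x

/-- The `k`-th Whitney number of the first kind. -/
noncomputable def whitney1 (cov : α → α → Prop) (bot : α) (rk : α → ℕ) (k : ℕ) : ℤ :=
  ∑ᶠ (x : α) (_ : rk x = k), muBot cov bot rk x

/-- The `k`-th Whitney number of the second kind. -/
noncomputable def whitney2 (rk : α → ℕ) (k : ℕ) : ℕ :=
  Nat.card {x : α // rk x = k}

/-- Two graded posets are Whitney duals if their Whitney numbers of the first and second
kind are swapped (up to sign). -/
def IsWhitneyDual (covP : α → α → Prop) (botP : α) (rkP : α → ℕ)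
    (covQ : β → β → Prop) (botQ : β) (rkQ : β → ℕ) : Prop :=
  ∀ k, (whitney1 covP botP rkP k).natAbs = whitney2 rkQ k ∧
       (whitney1 covQ botQ rkQ k).natAbs = whitney2 rkP k

/-- Two graded posets are Whitney twins if they have the same Whitney numbers of the first
and of the second kind. -/
def IsWhitneyTwin (covP : α → α → Prop) (botP : α) (rkP : α → ℕ)
    (covQ : β → β → Prop) (botQ : β) (rkQ : β → ℕ) : Prop :=
  ∀ k, whitney1 covP botP rkP k = whitney1 covQ botQ rkQ k ∧ whitney2 rkP k = whitney2 rkQ k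

/-- `(cov, bot, rk)` presents a graded poset with minimum `bot`. -/
def IsGradedPoset (cov : α → α → Prop) (bot : α) (rk : α → ℕ) : Prop :=
  (∀ x, leOf cov bot x) ∧ rk bot = 0 ∧ ∀ x y, cov x y → rk y = rk x + 1

/-- A graded poset has a Whitney dual. -/
def HasWhitneyDual {γ : Type} (cov : γ → γ → Prop) (bot : γ) (rk : γ → ℕ) : Prop :=
  ∃ (β : Type) (_ : Finite β) (covQ : β → β → Prop) (botQ : β) (rkQ : β → ℕ),
    IsGradedPoset covQ botQ rkQ ∧ IsWhitneyDual cov bot rk covQ botQ rkQ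

/-- Isomorphism of the posets generated by two cover relations. -/
def CovPosetIso (covP : α → α → Prop) (covQ : β → β → Prop) : Prop :=
  ∃ e : α ≃ β, ∀ x y, leOf covP x y ↔ leOf covQ (e x) (e y)

end Whitney

/-! ## The label posets `Λₙʷ` and `Λₙ•` (strict order relations)

Labels are triples `(a, b, u)` with `a < b` in `[n]` and `u ∈ {0,1}` (encoded as `Bool`). -/

/-- The strict order of `Λₙʷ = Γ₁ ⊕ ⋯ ⊕ Γ_{n-1}` where `Γ_a` carries the product order
`(a,b)ᵘ ≤ (a,c)ᵛ ↔ b ≤ c ∧ u ≤ v`. -/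
def ltLw (x y : ℕ × ℕ × Bool) : Prop :=
  x.1 < y.1 ∨ (x.1 = y.1 ∧ x.2.1 ≤ y.2.1 ∧ x.2.2 ≤ y.2.2 ∧ x.2 ≠ y.2)

/-- The strict order of `Λₙ• = A₁ ⊕ C₁ ⊕ ⋯ ⊕ A_{n-1} ⊕ C_{n-1}` where `A_a` is the
antichain of the `(a,b)⁰` and `C_a` is the chain of the `(a,b)¹` ordered by `b`. -/
def ltLp (x y : ℕ × ℕ × Bool) : Prop :=
  x.1 < y.1 ∨ (x.1 = y.1 ∧
    ((x.2.2 = false ∧ y.2.2 = true) ∨ (x.2.2 = true ∧ y.2.2 = true ∧ x.2.1 < y.2.1)))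

/-! ## Pointed and weighted partition posets -/

/-- The minimum of a finite set of naturals (`0` for the empty set). -/
def minB (B : Finset ℕ) : ℕ := B.min.untopD 0

/-- Pointed partitions of the ground set `A`: partitions of `A` into blocks, each block
carrying a distinguished (pointed) element.  A pointed block is a pair `(B, p)` with `p ∈ B`. -/
abbrev PPart (A : Finset ℕ) : Type :=
  {π : Finset (Finset ℕ × ℕ) //
    (∀ b ∈ π, b.2 ∈ b.1) ∧
    (∀ b ∈ π, ∀ b' ∈ π, b ≠ b' → Disjoint b.1 b'.1) ∧
    π.biUnion Prod.fst = A}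

/-- The cover relation of the pointed partition poset: merge two pointed blocks, the merged
block being pointed at the pointed element of one of the two. -/
def covPP {A : Finset ℕ} (π π' : PPart A) : Prop :=
  ∃ b1 ∈ π.1, ∃ b2 ∈ π.1, minB b1.1 < minB b2.1 ∧
    ∃ p : ℕ, (p = b1.2 ∨ p = b2.2) ∧
      π'.1 = insert (b1.1 ∪ b2.1, p) ((π.1.erase b1).erase b2)

/-- The labeling `λ•` (as a bare label map): the cover `u`-merging blocks `A, B` with
`min A < min B` gets the label `(min A, min B, u)`, where `u = 1` exactly when the merged
block is pointed at the pointed element of `A`. -/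
noncomputable def labPP {A : Finset ℕ} (π π' : PPart A) : ℕ × ℕ × Bool :=
  let olds := π.1 \ π'.1
  let mins := olds.image (fun b => minB b.1)
  (mins.min.untopD 0, mins.max.unbotD 0,
    if ∃ b ∈ olds, minB b.1 = mins.min.untopD 0 ∧ ∃ d ∈ π'.1 \ π.1, d.2 = b.2
      then true else false)

/-- The minimum of the pointed partition poset: all blocks are pointed singletons. -/
def botPP (A : Finset ℕ) : PPart A :=
  ⟨A.image fun i => ({i}, i), by
    refine ⟨?_, ?_, ?_⟩
    · intro b hb
      obtain ⟨i, -, rfl⟩ := Finset.mem_image.1 hb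
      exact Finset.mem_singleton_self i
    · intro b hb b' hb' hne
      obtain ⟨i, -, rfl⟩ := Finset.mem_image.1 hb
      obtain ⟨j, -, rfl⟩ := Finset.mem_image.1 hb'
      have hij : i ≠ j := fun h => hne (by rw [h])
      simp [Finset.disjoint_left, hij]
    · ext x
      simp⟩

/-- The rank function of the pointed partition poset. -/
def rkPP {A : Finset ℕ} (π : PPart A) : ℕ := A.card - π.1.card

/-- Weighted partitions of the ground set `A`: partitions of `A` into blocks, each block `B`
carrying a weight `v` with `0 ≤ v ≤ |B| - 1`. -/
abbrev WPart (A : Finset ℕ) : Type :=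
  {π : Finset (Finset ℕ × ℕ) //
    (∀ b ∈ π, b.2 < b.1.card) ∧
    (∀ b ∈ π, ∀ b' ∈ π, b ≠ b' → Disjoint b.1 b'.1) ∧
    π.biUnion Prod.fst = A}

/-- The cover relation of the weighted partition poset: merge blocks `A^v, B^w` into
`(A ∪ B)^(v+w+u)` for some `u ∈ {0,1}`. -/
def covWP {A : Finset ℕ} (π π' : WPart A) : Prop :=
  ∃ b1 ∈ π.1, ∃ b2 ∈ π.1, minB b1.1 < minB b2.1 ∧ ∃ u : Bool,
    π'.1 = insert (b1.1 ∪ b2.1, b1.2 + b2.2 + (if u then 1 else 0)) ((π.1.erase b1).erase b2)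

/-- The labeling `λ_w` (as a bare label map): the cover merging `A^v, B^w` with
`min A < min B` into `(A ∪ B)^(v+w+u)` gets the label `(min A, min B, u)`. -/
noncomputable def labWP {A : Finset ℕ} (π π' : WPart A) : ℕ × ℕ × Bool :=
  let olds := π.1 \ π'.1
  let mins := olds.image (fun b => minB b.1)
  (mins.min.untopD 0, mins.max.unbotD 0,
    if (π'.1 \ π.1).sum Prod.snd = olds.sum Prod.snd + 1 then true else false)

/-- The minimum of the weighted partition poset: all blocks singletons of weight `0`. -/
def botWP (A : Finset ℕ) : WPart A :=
  ⟨A.image fun i => ({i}, 0), by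
    refine ⟨?_, ?_, ?_⟩
    · intro b hb
      obtain ⟨i, -, rfl⟩ := Finset.mem_image.1 hb
      simp
    · intro b hb b' hb' hne
      obtain ⟨i, -, rfl⟩ := Finset.mem_image.1 hb
      obtain ⟨j, -, rfl⟩ := Finset.mem_image.1 hb'
      have hij : i ≠ j := fun h => hne (by rw [h])
      simp [Finset.disjoint_left, hij]
    · ext x
      simp⟩

/-- The rank function of the weighted partition poset. -/
def rkWP {A : Finset ℕ} (π : WPart A) : ℕ := A.card - π.1.card
/-! ## Bicolored binary trees and Lyndon forests -/

/-- Planar binary trees with `ℕ`-labeled leaves and `Bool`-colored internal vertices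
(`false` = color 0, `true` = color 1). -/
inductive BT : Type
  | leaf : ℕ → BT
  | node : Bool → BT → BT → BT
deriving DecidableEq

namespace BT

/-- The valency: the minimum leaf label of a tree. -/
def nu : BT → ℕ
  | leaf a => a
  | node _ l r => min l.nu r.nu

/-- The set of leaf labels of a tree. -/
def leaves : BT → Finset ℕ
  | leaf a => {a}
  | node _ l r => l.leaves ∪ r.leaves

/-- The number of internal vertices of a tree. -/
def internals : BT → ℕ
  | leaf _ => 0
  | node _ l r => l.internals + r.internals + 1

/-- A tree is normalized if its leaf labels are distinct and every internal vertex has the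
same valency as its left child. -/
def normalized : BT → Prop
  | leaf _ => True
  | node _ l r => l.normalized ∧ r.normalized ∧ Disjoint l.leaves r.leaves ∧ l.nu < r.nu

/-- The pointed Lyndon condition: at every internal vertex `v` with internal left child,
`color (L v) ≥ color v`, and if `color (L v) = color v = 1` then `v` is a Lyndon vertex,
i.e. `ν (R (L v)) > ν (R v)`. -/
def pLyn : BT → Prop
  | leaf _ => True
  | node c l r => l.pLyn ∧ r.pLyn ∧
      (match l with
       | leaf _ => True
       | node c' _ r' => c ≤ c' ∧ ((c' = c ∧ c = true) → r.nu < r'.nu))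

/-- The bicolored Lyndon condition: every internal vertex with internal left child is
Lyndon (`ν (R (L v)) > ν (R v)`) or satisfies `color (L v) > color v`. -/
def wLyn : BT → Prop
  | leaf _ => True
  | node c l r => l.wLyn ∧ r.wLyn ∧
      (match l with
       | leaf _ => True
       | node c' _ r' => r.nu < r'.nu ∨ c < c')

/-- The pointed element of a bicolored tree: a `1`-colored vertex keeps the point of its
left subtree and a `0`-colored vertex keeps the point of its right subtree. -/
def ppt : BT → ℕ
  | leaf a => a
  | node c l r => if c then l.ppt else r.ppt

end BT

/-- `u`-merging of two pointed Lyndon trees: create a new root of color `u` with the two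
trees as subtrees, then repeatedly slide the new vertex together with its right subtree
past its left child until the pointed Lyndon condition holds at the new vertex. -/
def mergeP (u : Bool) : BT → BT → BT
  | BT.leaf a, t2 => BT.node u (BT.leaf a) t2
  | BT.node c a b, t2 =>
      if u ≤ c ∧ ((c = true ∧ u = true) → t2.nu < b.nu)
      then BT.node u (BT.node c a b) t2
      else BT.node c (mergeP u a t2) b

/-- `u`-merging of two bicolored Lyndon trees: create a new root of color `u` with the two
trees as subtrees, then repeatedly slide the new vertex together with its right subtree
past its left child until the bicolored Lyndon condition holds at the new vertex. -/
def mergeW (u : Bool) : BT → BT → BT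
  | BT.leaf a, t2 => BT.node u (BT.leaf a) t2
  | BT.node c a b, t2 =>
      if t2.nu < b.nu ∨ u < c
      then BT.node u (BT.node c a b) t2
      else BT.node c (mergeW u a t2) b

/-- A valid forest on the ground set `[n]`, each tree normalized and satisfying `P`, the
trees having pairwise disjoint leaf sets which together cover `[n] = {1, …, n}`. -/
def ForestValid (n : ℕ) (P : BT → Prop) (F : Finset BT) : Prop :=
  (∀ t ∈ F, t.normalized ∧ P t) ∧
  (∀ t ∈ F, ∀ t' ∈ F, t ≠ t' → Disjoint t.leaves t'.leaves) ∧
  F.biUnion BT.leaves = Finset.Icc 1 n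

/-- The set of pointed Lyndon forests on `[n]`. -/
abbrev FLynP (n : ℕ) : Type := {F : Finset BT // ForestValid n BT.pLyn F}

/-- The set of bicolored Lyndon forests on `[n]`. -/
abbrev FLynW (n : ℕ) : Type := {F : Finset BT // ForestValid n BT.wLyn F}

/-- The cover relation on forests: `u`-merge two of the trees (the one with smaller minimum
leaf label going to the left). -/
def covForest (merge : Bool → BT → BT → BT) (F F' : Finset BT) : Prop :=
  ∃ t1 ∈ F, ∃ t2 ∈ F, t1.nu < t2.nu ∧ ∃ u : Bool,
    F' = insert (merge u t1 t2) ((F.erase t1).erase t2)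

/-- The cover relation of the poset of pointed Lyndon forests `FLyn_n^•`. -/
def covFP {n : ℕ} (F F' : FLynP n) : Prop := covForest mergeP F.1 F'.1

/-- The cover relation of the poset of bicolored Lyndon forests `FLyn_n^w`. -/
def covFW {n : ℕ} (F F' : FLynW n) : Prop := covForest mergeW F.1 F'.1

/-- The forest of `n` isolated leaves. -/
def botForest (n : ℕ) : Finset BT := (Finset.Icc 1 n).image BT.leaf

theorem botForest_valid (n : ℕ) (P : BT → Prop) (hP : ∀ a, P (BT.leaf a)) :
    ForestValid n P (botForest n) := by
  refine ⟨?_, ?_, ?_⟩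
  · intro t ht
    obtain ⟨i, -, rfl⟩ := Finset.mem_image.1 ht
    exact ⟨trivial, hP i⟩
  · intro t ht t' ht' hne
    obtain ⟨i, -, rfl⟩ := Finset.mem_image.1 ht
    obtain ⟨j, -, rfl⟩ := Finset.mem_image.1 ht'
    have hij : i ≠ j := fun h => hne (by rw [h])
    simp only [BT.leaves]
    simp [Finset.disjoint_left, hij]
  · ext x
    simp [botForest, BT.leaves]

/-- The minimum of the poset of pointed Lyndon forests. -/
def botFP (n : ℕ) : FLynP n := ⟨botForest n, botForest_valid n _ fun _ => trivial⟩

/-- The minimum of the poset of bicolored Lyndon forests. -/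
def botFW (n : ℕ) : FLynW n := ⟨botForest n, botForest_valid n _ fun _ => trivial⟩

/-- The rank of a forest: its total number of internal vertices. -/
def rkForest (F : Finset BT) : ℕ := F.sum BT.internals

/-- The rank function of `FLyn_n^•`. -/
def rkFP {n : ℕ} (F : FLynP n) : ℕ := rkForest F.1

/-- The rank function of `FLyn_n^w`. -/
def rkFW {n : ℕ} (F : FLynW n) : ℕ := rkForest F.1

/-! ## The Whitney dual construction `R_λ(P)` -/

section RPoset

variable {α : Type*} {L : Type*}

/-- Swap the leftmost ascent of a word of labels. -/
noncomputable def swapFirstAscent (lt : L → L → Prop) : List L → List L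
  | a :: b :: rest => if lt a b then b :: a :: rest else a :: swapFirstAscent lt (b :: rest)
  | w => w

/-- Sort a word of labels by repeatedly swapping its leftmost ascent until it is
ascent-free. -/
noncomputable def sortWord (lt : L → L → Prop) (w : List L) : List L :=
  (swapFirstAscent lt)^[w.length * w.length] w

/-- The underlying set of the Whitney dual `R_λ(P)`: pairs `(x, w)` where `w` is the label
word of an ascent-free saturated chain from `0̂` to `x`. -/
abbrev RPoset (cov : α → α → Prop) (lab : α → α → L) (lt : L → L → Prop) (bot : α) : Type _ :=
  {q : α × List L //
    ∃ c, IsSatChain cov bot q.1 c ∧ AscFree lt (wordOf lab c) ∧ wordOf lab c = q.2}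

/-- The cover relation of `R_λ(P)`: `(x, w) ⋖ (y, u)` iff `x ⋖ y` and `u` is obtained by
sorting the label of `x ⋖ y` into `w`. -/
def covR (cov : α → α → Prop) (lab : α → α → L) (lt : L → L → Prop) (bot : α)
    (p q : RPoset cov lab lt bot) : Prop :=
  cov p.1.1 q.1.1 ∧ q.1.2 = sortWord lt (p.1.2 ++ [lab p.1.1 q.1.1])

end RPoset

/-! ## Reiner's poset of rooted spanning forests -/

/-- A rooted spanning forest on `[n]`, encoded by its parent function: `f i` is the parent
of the vertex `i` (`f i = i` for roots), vertices outside `[n]` being fixed, and every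
vertex reaching a root after finitely many steps (acyclicity). -/
def SFvalid (n : ℕ) (f : ℕ → ℕ) : Prop :=
  (∀ i ∈ Finset.Icc 1 n, f i ∈ Finset.Icc 1 n) ∧
  (∀ i, i ∉ Finset.Icc 1 n → f i = i) ∧
  (∀ i, ∃ k, f^[k + 1] i = f^[k] i)

/-- Reiner's poset `SF_n` of rooted spanning forests of the complete graph on `[n]`. -/
abbrev SF (n : ℕ) : Type := {f : ℕ → ℕ // SFvalid n f}

/-- The cover relation of `SF_n`: add an edge between the roots of two trees, one of the
two roots becoming the root of the merged tree. -/
def covSF {n : ℕ} (f g : SF n) : Prop :=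
  ∃ r1 ∈ Finset.Icc 1 n, ∃ r2 ∈ Finset.Icc 1 n, r1 ≠ r2 ∧
    f.1 r1 = r1 ∧ f.1 r2 = r2 ∧
    (g.1 = Function.update f.1 r1 r2 ∨ g.1 = Function.update f.1 r2 r1)

/-- The rank of a rooted spanning forest: its number of edges. -/
def rkSF {n : ℕ} (f : SF n) : ℕ := ((Finset.Icc 1 n).filter fun i => f.1 i ≠ i).card
/-! ## Further constructions used in particular statements -/

/-- The map `Φ` on underlying finsets: a pointed block `(B, q)` of a pointed partition
above `α` is sent to the set of minima of the `α`-blocks contained in `B`, pointed at the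
minimum of the `α`-block containing `q`. -/
noncomputable def PhiMap (af : Finset (Finset ℕ × ℕ)) (pf : Finset (Finset ℕ × ℕ)) :
    Finset (Finset ℕ × ℕ) :=
  pf.image fun b =>
    ((af.filter fun c => c.1 ⊆ b.1).image fun c => minB c.1,
     ((af.filter fun c => b.2 ∈ c.1).image fun c => minB c.1).min.untopD 0)

/-- The expected word of labels of the unique increasing maximal chain of the interval
`[0̂, [n]^p]` of the pointed partition poset:
`(1,2)¹ ⋯ (1,n)¹` if `p = 1`, and `(1,p)⁰ (1,2)¹ ⋯ (1,p-1)¹ (1,p+1)¹ ⋯ (1,n)¹` otherwise. -/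
def expectedWordP (n p : ℕ) : List (ℕ × ℕ × Bool) :=
  let base := (List.range (n - 1)).map fun i => ((1 : ℕ), i + 2, true)
  if p = 1 then base else ((1 : ℕ), p, false) :: base.erase (1, p, true)

/-- Merge two words of labels, each with non-increasing first components, into a single
word with non-increasing first components. -/
def mergeByNu : List (ℕ × ℕ × Bool) → List (ℕ × ℕ × Bool) → List (ℕ × ℕ × Bool)
  | [], ys => ys
  | xs, [] => xs
  | x :: xs, y :: ys =>
      if y.1 ≤ x.1 then x :: mergeByNu xs (y :: ys) else y :: mergeByNu (x :: xs) ys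
termination_by xs ys => xs.length + ys.length

/-- The word of labels of a tree read along the reverse-minimal linear extension of its
internal vertices: the internal vertex `v` contributes `(ν (L v), ν (R v), color v)`, the
vertices being listed with non-increasing valencies (descendants first among equal
valencies). -/
def BT.rmword : BT → List (ℕ × ℕ × Bool)
  | BT.leaf _ => []
  | BT.node c l r => mergeByNu l.rmword r.rmword ++ [(l.nu, r.nu, c)]

/-- The word of labels of the saturated chain `c(F)` associated to a forest `F`, read along
the reverse-minimal linear extension of the internal vertices of `F`. -/
noncomputable def forestWord (F : Finset BT) : List (ℕ × ℕ × Bool) :=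
  (F.toList.map BT.rmword).foldr mergeByNu []

/-- `TLyn_{n,p}^•`: pointed Lyndon trees on `[n]` whose associated chain ends at `[n]^p`,
i.e. whose tracked pointed element is `p`. -/
abbrev TLynBullet (n p : ℕ) : Type :=
  {T : BT // T.normalized ∧ T.pLyn ∧ T.leaves = Finset.Icc 1 n ∧ T.ppt = p}

/-- The labeling `λ̃` of `Πₙ•` proposed by Bellier-Millès, Delcroix-Oger and Hoffbeck:
the cover `u`-merging blocks with minima `a < b` in a pointed partition `π` with `|π|`
blocks is labeled `(b, a + n - |π|)` if `u = 0` and `(b, b + n - |π|)` if `u = 1`. -/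
noncomputable def labT (n : ℕ) {A : Finset ℕ} (π π' : PPart A) : ℕ × ℕ :=
  let olds := π.1 \ π'.1
  let mins := olds.image fun b => minB b.1
  let a := mins.min.untopD 0
  let b := mins.max.unbotD 0
  if ∃ c ∈ olds, minB c.1 = a ∧ ∃ d ∈ π'.1 \ π.1, d.2 = c.2
  then (b, b + n - π.1.card)
  else (b, a + n - π.1.card)

/-- The (strict) lexicographic order on `ℕ × ℕ`. -/
def ltT (x y : ℕ × ℕ) : Prop := x.1 < y.1 ∨ (x.1 = y.1 ∧ x.2 < y.2)

/-!
A rank-two interval `[x, y]` consists of two successive merges. If the second merge does not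
involve the block `B₁ ∪ B₂` created by the first one, the two merges commute and their labels
are exchanged. The block `B₁ ∪ B₂` cannot be the block with the larger minimum in the second
merge, since the first letter of the labels would then decrease. If it is the block with the
smaller minimum, merged with a block `D`, both labels start with `min B₁`, so the increase
forces the second merge to keep the point of `B₁ ∪ B₂`; one may then merge `B₁` with `D` first,
pointed in `B₁`, and `B₂` afterwards. Uniqueness holds because the label of a cover determines
the cover among those starting at a given pointed partition.
-/

section RankTwo

variable {α L : Type*} {cov : α → α → Prop} {lab : α → α → L}

lemma isSatChain_triple {x w y : α} : IsSatChain cov x y [x, w, y] ↔ cov x w ∧ cov w y := by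
  change List.IsChain cov [x, w, y] ∧ _ ↔ _
  simp

lemma IsSatChain.eq_triple_of_wordOf_eq_pair {x y : α} {c : List α} {a b : L}
    (hc : IsSatChain cov x y c) (hw : wordOf lab c = [a, b]) :
    ∃ w, c = [x, w, y] ∧ cov x w ∧ cov w y ∧ lab x w = a ∧ lab w y = b := by
  rcases c with _ | ⟨x', _ | ⟨w, _ | ⟨y', _ | ⟨_, _⟩⟩⟩⟩ <;> simp [wordOf] at hw
  obtain ⟨hch, hx, hy⟩ := hc
  simp only [List.head?_cons, List.getLast?_cons_cons, List.getLast?_singleton,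
    Option.some.injEq] at hx hy
  subst hx hy
  obtain ⟨hxw, hwy⟩ := isSatChain_triple.1 ⟨hch, rfl, rfl⟩
  exact ⟨w, rfl, hxw, hwy, hw⟩

theorem rankTwoSwitch_of_exists_swap {lt : L → L → Prop}
    (hinj : ∀ {x w w'}, cov x w → cov x w' → lab x w = lab x w' → w = w')
    (hswap : ∀ {x z y}, cov x z → cov z y → lt (lab x z) (lab z y) →
      ∃ w, cov x w ∧ cov w y ∧ lab x w = lab z y ∧ lab w y = lab x z) :
    RankTwoSwitch cov lab lt := by
  intro x y c a b hc hinc hw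
  obtain ⟨z, rfl, hxz, hzy, rfl, rfl⟩ := hc.eq_triple_of_wordOf_eq_pair hw
  have hlt : lt (lab x z) (lab z y) := (List.isChain_cons_cons.1 hinc).1
  obtain ⟨w, hxw, hwy, hxw_lab, hwy_lab⟩ := hswap hxz hzy hlt
  refine ⟨[x, w, y], ⟨isSatChain_triple.2 ⟨hxw, hwy⟩, by simp [wordOf, hxw_lab, hwy_lab]⟩, ?_⟩
  rintro c' ⟨hc', hw'⟩
  obtain ⟨w', rfl, hxw', -, hlab, -⟩ := hc'.eq_triple_of_wordOf_eq_pair hw'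
  rw [hinj hxw' hxw (hlab.trans hxw_lab.symm)]

end RankTwo

lemma ltLp.fst_le {a b : ℕ × ℕ × Bool} (h : ltLp a b) : a.1 ≤ b.1 := by
  rcases h with h | ⟨h, -⟩ <;> omega

lemma ltLp.snd_snd_of_fst_eq {a b : ℕ × ℕ × Bool} (h : ltLp a b) (he : a.1 = b.1) :
    b.2.2 = true := by
  rcases h with h | ⟨-, ⟨-, h⟩ | ⟨-, h, -⟩⟩
  · omega
  all_goals exact h

lemma minB_eq_min' {s : Finset ℕ} (hs : s.Nonempty) : minB s = s.min' hs := by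
  rw [minB, ← Finset.coe_min' hs]
  rfl

lemma minB_mem {s : Finset ℕ} (hs : s.Nonempty) : minB s ∈ s := by
  rw [minB_eq_min' hs]
  exact Finset.min'_mem s hs

lemma minB_union_of_le {s t : Finset ℕ} (hs : s.Nonempty) (ht : t.Nonempty)
    (h : minB s ≤ minB t) : minB (s ∪ t) = minB s := by
  rw [minB_eq_min' (hs.mono Finset.subset_union_left), Finset.min'_union hs ht,
    ← minB_eq_min', ← minB_eq_min', min_eq_left h]

def mergeBlocks (s : Finset (Finset ℕ × ℕ)) (b₁ b₂ : Finset ℕ × ℕ) (p : ℕ) :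
    Finset (Finset ℕ × ℕ) :=
  insert (b₁.1 ∪ b₂.1, p) ((s.erase b₁).erase b₂)

section MergeBlocks

variable {s : Finset (Finset ℕ × ℕ)} {b₁ b₂ c d₁ d₂ : Finset ℕ × ℕ} {p q : ℕ}

lemma mem_mergeBlocks :
    c ∈ mergeBlocks s b₁ b₂ p ↔ c = (b₁.1 ∪ b₂.1, p) ∨ c ≠ b₂ ∧ c ≠ b₁ ∧ c ∈ s := by
  simp [mergeBlocks]

lemma mergeBlocks_comm (h₁ : (b₁.1 ∪ b₂.1, p) ≠ d₁) (h₂ : (b₁.1 ∪ b₂.1, p) ≠ d₂)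
    (h₃ : (d₁.1 ∪ d₂.1, q) ≠ b₁) (h₄ : (d₁.1 ∪ d₂.1, q) ≠ b₂) :
    mergeBlocks (mergeBlocks s b₁ b₂ p) d₁ d₂ q = mergeBlocks (mergeBlocks s d₁ d₂ q) b₁ b₂ p := by
  ext c
  simp only [mem_mergeBlocks]
  grind

lemma mergeBlocks_mergeBlocks {r : ℕ} (h₁ : (b₁.1 ∪ b₂.1, p) ∉ s) (h₂ : (b₁.1 ∪ c.1, r) ∉ s) :
    mergeBlocks (mergeBlocks s b₁ b₂ p) (b₁.1 ∪ b₂.1, p) c q =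
      mergeBlocks (mergeBlocks s b₁ c r) (b₁.1 ∪ c.1, r) b₂ q := by
  ext e
  simp only [mem_mergeBlocks, Finset.union_right_comm b₁.1 b₂.1 c.1]
  grind

end MergeBlocks

namespace PPart

variable {A : Finset ℕ} (π : PPart A) {b₁ b₂ : Finset ℕ × ℕ} {p : ℕ}

lemma nonempty_of_mem {b : Finset ℕ × ℕ} (hb : b ∈ π.1) : b.1.Nonempty :=
  ⟨b.2, π.2.1 b hb⟩

lemma eq_of_minB_eq {b b' : Finset ℕ × ℕ} (hb : b ∈ π.1) (hb' : b' ∈ π.1)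
    (h : minB b.1 = minB b'.1) : b = b' := by
  by_contra hne
  refine Finset.disjoint_left.1 (π.2.2.1 b hb b' hb' hne) (minB_mem (π.nonempty_of_mem hb)) ?_
  rw [h]
  exact minB_mem (π.nonempty_of_mem hb')

lemma union_not_mem (hb₁ : b₁ ∈ π.1) (hb₂ : b₂ ∈ π.1) (hne : b₁ ≠ b₂) (p : ℕ) :
    (b₁.1 ∪ b₂.1, p) ∉ π.1 := by
  intro hmem
  have hne₁ : ((b₁.1 ∪ b₂.1, p) : Finset ℕ × ℕ) ≠ b₁ := by
    intro h
    have h₂ : b₂.2 ∈ b₁.1 := h ▸ Finset.mem_union_right _ (π.2.1 b₂ hb₂)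
    exact Finset.disjoint_left.1 (π.2.2.1 b₁ hb₁ b₂ hb₂ hne) h₂ (π.2.1 b₂ hb₂)
  exact Finset.disjoint_left.1 (π.2.2.1 _ hmem b₁ hb₁ hne₁)
    (Finset.mem_union_left _ (π.2.1 b₁ hb₁)) (π.2.1 b₁ hb₁)

lemma exists_eq_mergeBlocks (hb₁ : b₁ ∈ π.1) (hb₂ : b₂ ∈ π.1) (hne : b₁ ≠ b₂)
    (hp : p = b₁.2 ∨ p = b₂.2) : ∃ σ : PPart A, σ.1 = mergeBlocks π.1 b₁ b₂ p := by
  obtain ⟨hpt, hdisj, hcover⟩ := π.2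
  have hrest : ∀ c ∈ (π.1.erase b₁).erase b₂, c ∈ π.1 ∧ c ≠ b₁ ∧ c ≠ b₂ := by
    intro c hc
    simp only [Finset.mem_erase] at hc
    exact ⟨hc.2.2, hc.2.1, hc.1⟩
  have hnew : ∀ c ∈ (π.1.erase b₁).erase b₂, Disjoint (b₁.1 ∪ b₂.1) c.1 := by
    intro c hc
    obtain ⟨hc, hc₁, hc₂⟩ := hrest c hc
    exact Finset.disjoint_union_left.2
      ⟨hdisj b₁ hb₁ c hc (Ne.symm hc₁), hdisj b₂ hb₂ c hc (Ne.symm hc₂)⟩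
  refine ⟨⟨mergeBlocks π.1 b₁ b₂ p, ?_, ?_, ?_⟩, rfl⟩
  · simp only [mergeBlocks, Finset.forall_mem_insert]
    refine ⟨?_, fun c hc => hpt c (hrest c hc).1⟩
    rcases hp with rfl | rfl
    · exact Finset.mem_union_left _ (hpt b₁ hb₁)
    · exact Finset.mem_union_right _ (hpt b₂ hb₂)
  · intro c hc c' hc' hcc'
    rcases Finset.mem_insert.1 hc with rfl | hc <;> rcases Finset.mem_insert.1 hc' with rfl | hc'
    · exact absurd rfl hcc'
    · exact hnew c' hc'
    · exact (hnew c hc).symm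
    · exact hdisj c (hrest c hc).1 c' (hrest c' hc').1 hcc'
  · have hb₂' : b₂ ∈ π.1.erase b₁ := Finset.mem_erase.2 ⟨Ne.symm hne, hb₂⟩
    rw [mergeBlocks, Finset.biUnion_insert, Finset.union_assoc, ← Finset.biUnion_insert,
      Finset.insert_erase hb₂', ← Finset.biUnion_insert, Finset.insert_erase hb₁, hcover]

end PPart

variable {A : Finset ℕ} {π σ σ' : PPart A} {b₁ b₂ : Finset ℕ × ℕ} {p : ℕ}

lemma labPP_of_eq_mergeBlocks (hb₁ : b₁ ∈ π.1) (hb₂ : b₂ ∈ π.1) (hlt : minB b₁.1 < minB b₂.1)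
    (hσ : σ.1 = mergeBlocks π.1 b₁ b₂ p) :
    labPP π σ = (minB b₁.1, minB b₂.1, decide (p = b₁.2)) := by
  have hne : b₁ ≠ b₂ := by rintro rfl; exact lt_irrefl _ hlt
  have hnew := π.union_not_mem hb₁ hb₂ hne p
  have holds : π.1 \ σ.1 = {b₁, b₂} := by
    ext c
    rw [hσ, Finset.mem_sdiff, mem_mergeBlocks]
    grind
  have hnews : σ.1 \ π.1 = {(b₁.1 ∪ b₂.1, p)} := by
    ext c
    rw [hσ, Finset.mem_sdiff, mem_mergeBlocks]
    grind
  have hmin : ({minB b₁.1, minB b₂.1} : Finset ℕ).min.untopD 0 = minB b₁.1 := by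
    rw [Finset.min_insert, Finset.min_singleton, ← WithTop.coe_min, WithTop.untopD_coe,
      min_eq_left hlt.le]
  have hmax : ({minB b₁.1, minB b₂.1} : Finset ℕ).max.unbotD 0 = minB b₂.1 := by
    rw [Finset.max_insert, Finset.max_singleton, ← WithBot.coe_max, WithBot.unbotD_coe,
      max_eq_right hlt.le]
  have hcond : (∃ b ∈ ({b₁, b₂} : Finset (Finset ℕ × ℕ)), minB b.1 = minB b₁.1 ∧
      ∃ d ∈ ({(b₁.1 ∪ b₂.1, p)} : Finset (Finset ℕ × ℕ)), d.2 = b.2) ↔ p = b₁.2 := by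
    simp [hlt.ne']
  simp only [labPP, holds, hnews, Finset.image_insert, Finset.image_singleton, hmin, hmax, hcond,
    Bool.if_false_right, Bool.and_true]

lemma covPP_eq_of_labPP_eq (h : covPP π σ) (h' : covPP π σ') (hl : labPP π σ = labPP π σ') :
    σ = σ' := by
  obtain ⟨b₁, hb₁, b₂, hb₂, hlt, p, hp, hσ⟩ := h
  obtain ⟨c₁, hc₁, c₂, hc₂, hlt', q, hq, hσ'⟩ := h'
  rw [labPP_of_eq_mergeBlocks hb₁ hb₂ hlt hσ, labPP_of_eq_mergeBlocks hc₁ hc₂ hlt' hσ'] at hl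
  simp only [Prod.mk.injEq, decide_eq_decide] at hl
  obtain ⟨h₁, h₂, hpq⟩ := hl
  obtain rfl := π.eq_of_minB_eq hb₁ hc₁ h₁
  obtain rfl := π.eq_of_minB_eq hb₂ hc₂ h₂
  obtain rfl : p = q := by grind
  exact Subtype.ext (hσ.trans hσ'.symm)

section Swap

variable {x z y : PPart A} {d₁ d₂ : Finset ℕ × ℕ} {q : ℕ}

lemma exists_covPP_swap_of_disjoint (hb₁ : b₁ ∈ x.1) (hb₂ : b₂ ∈ x.1)
    (hb : minB b₁.1 < minB b₂.1) (hp : p = b₁.2 ∨ p = b₂.2) (hz : z.1 = mergeBlocks x.1 b₁ b₂ p)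
    (hd₁ : d₁ ∈ x.1) (hd₂ : d₂ ∈ x.1)
    (hd : minB d₁.1 < minB d₂.1) (hq : q = d₁.2 ∨ q = d₂.2)
    (hd₁b₁ : d₁ ≠ b₁) (hd₁b₂ : d₁ ≠ b₂) (hd₂b₁ : d₂ ≠ b₁) (hd₂b₂ : d₂ ≠ b₂)
    (hy : y.1 = mergeBlocks z.1 d₁ d₂ q) :
    ∃ w, covPP x w ∧ covPP w y ∧ labPP x w = labPP z y ∧ labPP w y = labPP x z := by
  have hd₁₂ : d₁ ≠ d₂ := by rintro rfl; exact lt_irrefl _ hd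
  have hRx := x.union_not_mem hb₁ hb₂ (by rintro rfl; exact lt_irrefl _ hb) p
  have hDx := x.union_not_mem hd₁ hd₂ hd₁₂ q
  obtain ⟨w, hw⟩ := x.exists_eq_mergeBlocks hd₁ hd₂ hd₁₂ hq
  have hb₁w : b₁ ∈ w.1 := by grind [mem_mergeBlocks]
  have hb₂w : b₂ ∈ w.1 := by grind [mem_mergeBlocks]
  have hd₁z : d₁ ∈ z.1 := by grind [mem_mergeBlocks]
  have hd₂z : d₂ ∈ z.1 := by grind [mem_mergeBlocks]
  have hyw : y.1 = mergeBlocks w.1 b₁ b₂ p := by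
    rw [hy, hz, hw, mergeBlocks_comm] <;> grind
  refine ⟨w, ⟨d₁, hd₁, d₂, hd₂, hd, q, hq, hw⟩, ⟨b₁, hb₁w, b₂, hb₂w, hb, p, hp, hyw⟩, ?_, ?_⟩
  · rw [labPP_of_eq_mergeBlocks hd₁ hd₂ hd hw, labPP_of_eq_mergeBlocks hd₁z hd₂z hd hy]
  · rw [labPP_of_eq_mergeBlocks hb₁w hb₂w hb hyw, labPP_of_eq_mergeBlocks hb₁ hb₂ hb hz]

lemma exists_covPP_swap_of_nested (hb₁ : b₁ ∈ x.1) (hb₂ : b₂ ∈ x.1)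
    (hb : minB b₁.1 < minB b₂.1) (hp : p = b₁.2 ∨ p = b₂.2) (hz : z.1 = mergeBlocks x.1 b₁ b₂ p)
    (hd : d₁ ∈ x.1) (hbd : minB b₁.1 < minB d₁.1) (hdb₂ : d₁ ≠ b₂)
    (hy : y.1 = mergeBlocks z.1 (b₁.1 ∪ b₂.1, p) d₁ p) :
    ∃ w, covPP x w ∧ covPP w y ∧ labPP x w = labPP z y ∧ labPP w y = labPP x z := by
  have hb₁d : b₁ ≠ d₁ := by rintro rfl; exact lt_irrefl _ hbd
  have hRx := x.union_not_mem hb₁ hb₂ (by rintro rfl; exact lt_irrefl _ hb) p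
  have hWx := x.union_not_mem hb₁ hd hb₁d b₁.2
  have hRmin : minB (b₁.1 ∪ b₂.1) = minB b₁.1 :=
    minB_union_of_le (x.nonempty_of_mem hb₁) (x.nonempty_of_mem hb₂) hb.le
  have hWmin : minB (b₁.1 ∪ d₁.1) = minB b₁.1 :=
    minB_union_of_le (x.nonempty_of_mem hb₁) (x.nonempty_of_mem hd) hbd.le
  obtain ⟨w, hw⟩ := x.exists_eq_mergeBlocks hb₁ hd hb₁d (Or.inl rfl)
  have hWw : (b₁.1 ∪ d₁.1, b₁.2) ∈ w.1 := by grind [mem_mergeBlocks]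
  have hb₂w : b₂ ∈ w.1 := by grind [mem_mergeBlocks]
  have hRz : (b₁.1 ∪ b₂.1, p) ∈ z.1 := by grind [mem_mergeBlocks]
  have hdz : d₁ ∈ z.1 := by grind [mem_mergeBlocks]
  have hyw : y.1 = mergeBlocks w.1 (b₁.1 ∪ d₁.1, b₁.2) b₂ p := by
    rw [hy, hz, hw, mergeBlocks_mergeBlocks hRx hWx]
  refine ⟨w, ⟨b₁, hb₁, d₁, hd, hbd, b₁.2, Or.inl rfl, hw⟩,
    ⟨_, hWw, b₂, hb₂w, hWmin ▸ hb, p, by grind, hyw⟩, ?_, ?_⟩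
  · rw [labPP_of_eq_mergeBlocks hb₁ hd hbd hw,
      labPP_of_eq_mergeBlocks hRz hdz (hRmin ▸ hbd) hy, hRmin]
    simp
  · rw [labPP_of_eq_mergeBlocks hWw hb₂w (hWmin ▸ hb) hyw,
      labPP_of_eq_mergeBlocks hb₁ hb₂ hb hz, hWmin]

end Swap

theorem exists_covPP_swap {x z y : PPart A} (hxz : covPP x z) (hzy : covPP z y)
    (hlt : ltLp (labPP x z) (labPP z y)) :
    ∃ w, covPP x w ∧ covPP w y ∧ labPP x w = labPP z y ∧ labPP w y = labPP x z := by
  obtain ⟨b₁, hb₁, b₂, hb₂, hb, p, hp, hz : z.1 = mergeBlocks x.1 b₁ b₂ p⟩ := hxz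
  obtain ⟨d₁, hd₁, d₂, hd₂, hd, q, hq, hy : y.1 = mergeBlocks z.1 d₁ d₂ q⟩ := hzy
  have hRmin : minB (b₁.1 ∪ b₂.1) = minB b₁.1 :=
    minB_union_of_le (x.nonempty_of_mem hb₁) (x.nonempty_of_mem hb₂) hb.le
  rw [labPP_of_eq_mergeBlocks hb₁ hb₂ hb hz, labPP_of_eq_mergeBlocks hd₁ hd₂ hd hy] at hlt
  rw [hz, mem_mergeBlocks] at hd₁ hd₂
  rcases hd₂ with rfl | ⟨hd₂b₂, hd₂b₁, hd₂x⟩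
  · have hfst := hlt.fst_le
    dsimp only at hfst hd
    omega
  rcases hd₁ with rfl | ⟨hd₁b₂, hd₁b₁, hd₁x⟩
  · -- both labels start with `min b₁`, so the second merge keeps the point `p`
    obtain rfl : q = p := by simpa using hlt.snd_snd_of_fst_eq hRmin.symm
    exact exists_covPP_swap_of_nested hb₁ hb₂ hb hp hz hd₂x (hRmin ▸ hd) hd₂b₂ hy
  · exact exists_covPP_swap_of_disjoint hb₁ hb₂ hb hp hz hd₁x hd₂x hd hq hd₁b₁ hd₁b₂ hd₂b₁ hd₂b₂ hy

/-- The labeling `λ•` of the pointed partition poset `Πₙ•` satisfies the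
rank two switching property: in every rank-two interval whose unique increasing maximal
chain has word of labels `ab`, there is a unique maximal chain with word of labels `ba`. -/
theorem pointed_lambda_rank_two_switch (n : ℕ) :
    RankTwoSwitch (covPP (A := Finset.Icc 1 n)) (labPP (A := Finset.Icc 1 n)) ltLp :=
  rankTwoSwitch_of_exists_swap covPP_eq_of_labPP_eq exists_covPP_swap
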